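/- Let d ≥ 1, θ > 0, and let σ : ℝ^d → ℝ^{d×d} satisfy σ(x)σ(x)ᵀ = θ I_{d×d} + σ̂(x)σ̂(x)ᵀ for a measurable σ̂ : ℝ^d → ℝ^{d×d}. Let b : ℝ^d → ℝ^d be measurable, and suppose there are constants L, α₁, α₂, R > 0 such that for all x, y ∈ ℝ^d: (I) ‖σ̂(x) − σ̂(y)‖_HS ≤ L|x−y|, and (II) 2⟨b(x) − b(y), x−y⟩ + ‖σ̂(x) − σ̂(y)‖²_HS ≤ φ(|x−y|)|x−y|, where φ(r) := r·[ α₁ 1_{[0,R]}(r) + ( α₁ − (α₁+α₂)(r/R − 1) ) 1_{(R,2R]}(r) − α₂ 1_{(2R,∞)}(r) ]. Define the second-order operator ℒ f(x) := ⟨b(x), ∇f(x)⟩ + (1/2) Tr( σ(x)σ(x)ᵀ ∇²f(x) ). Then for every q with 2 < q < 2 + α₂ L^{−2}, the function g(x) := (1 + |x|²)^{q/2} satisfies a Lyapunov inequality: there exist constants K₁, K₂ > 0 such that ℒg(x) ≤ K₁ − K₂ g(x) for all x ∈ ℝ^d. -/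

import Mathlib

open MeasureTheory Matrix Filter Topology RealInnerProductSpace

noncomputable section

/-- The Hilbert–Schmidt (Frobenius) norm of a matrix. -/
def hsNorm {d : ℕ} (A : Matrix (Fin d) (Fin d) ℝ) : ℝ :=
  Real.sqrt (∑ i, ∑ j, (A i j) ^ 2)

/-- The second partial derivative `∂_i ∂_j g`. -/
def secondPartial (d : ℕ) (g : EuclideanSpace ℝ (Fin d) → ℝ) (x : EuclideanSpace ℝ (Fin d))
    (i j : Fin d) : ℝ :=
  fderiv ℝ (fun x' => fderiv ℝ g x' (EuclideanSpace.single j 1)) x (EuclideanSpace.single i 1)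

/-- The diffusion generator `ℒ f(x) = ⟨b(x), ∇f(x)⟩ + (1/2) Tr(σ(x)σ(x)ᵀ ∇²f(x))`. -/
def diffusionGen (d : ℕ) (b : EuclideanSpace ℝ (Fin d) → EuclideanSpace ℝ (Fin d))
    (σ : EuclideanSpace ℝ (Fin d) → Matrix (Fin d) (Fin d) ℝ)
    (g : EuclideanSpace ℝ (Fin d) → ℝ) (x : EuclideanSpace ℝ (Fin d)) : ℝ :=
  ⟪b x, gradient g x⟫ + (1/2) * ∑ i, ∑ j, (σ x * (σ x)ᵀ) i j * secondPartial d g x j i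

/-- The long-distance dissipativity profile `φ` of Example 5.1. -/
def cutoffPhi (α₁ α₂ R r : ℝ) : ℝ :=
  r * (α₁ * (Set.Icc (0:ℝ) R).indicator (fun _ => (1:ℝ)) r
    + (α₁ - (α₁ + α₂) * (r / R - 1)) * (Set.Ioc R (2 * R)).indicator (fun _ => (1:ℝ)) r
    - α₂ * (Set.Ioi (2 * R)).indicator (fun _ => (1:ℝ)) r)


/-! Write `u = 1 + ‖x‖²` and `g = u ^ (q/2)`. The Hessian of `g` is
`q u^(q/2-1) I + q (q-2) u^(q/2-2) x xᵀ`; with `σσᵀ = θ I + σ̂σ̂ᵀ`, `xᵀσσᵀx ≤ (θ + ‖σ̂‖²) u` and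
`Tr σσᵀ = θ d + ‖σ̂‖²` this gives
`ℒg ≤ (q/2) u^(q/2-1) (2⟨b x, x⟩ + (q-1) ‖σ̂ x‖² + θ (q-2+d))`.
Condition (II) at `y = 0` bounds `2⟨b x, x⟩ + ‖σ̂ x - σ̂ 0‖²` by `-α₂ |x|² + O(|x|)`, and by (I)
the surplus `(q-2) ‖σ̂ x - σ̂ 0‖²` costs at most `(q-2) L² |x|²`. As `q < 2 + α₂ / L²`, the
bracket is at most `C - ε u / 2` with `ε = α₂ - (q-2) L² > 0`, and finally
`u^(q/2-1) (C' - c u) ≤ K - (c/2) u^(q/2)` for a suitable constant `K`. -/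

theorem exists_rpow_mul_sub_le {s c C : ℝ} (hs : 0 ≤ s) (hc : 0 < c) (hC : 0 ≤ C) :
    ∃ K > 0, ∀ u > 0, u ^ s * (C - c * u) ≤ K - c / 2 * u ^ (s + 1) := by
  refine ⟨C * (2 * C / c) ^ s + 1, by positivity, fun u hu => ?_⟩
  rw [Real.rpow_add_one hu.ne']
  suffices C * u ^ s ≤ C * (2 * C / c) ^ s + c / 2 * (u ^ s * u) by linarith
  have hus : 0 ≤ u ^ s := by positivity
  rcases le_or_gt u (2 * C / c) with h | h
  · have := mul_le_mul_of_nonneg_left (Real.rpow_le_rpow hu.le h hs) hC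
    have : 0 ≤ c / 2 * (u ^ s * u) := by positivity
    linarith
  · have hCu : C ≤ c / 2 * u := by rw [div_lt_iff₀ hc] at h; linarith
    have := mul_le_mul_of_nonneg_right hCu hus
    have : 0 ≤ C * (2 * C / c) ^ s := by positivity
    linarith

theorem cutoffPhi_le {α₁ α₂ R r : ℝ} (hα : 0 ≤ α₁ + α₂) (hR : 0 ≤ R) (hr : 0 ≤ r) :
    cutoffPhi α₁ α₂ R r ≤ 2 * R * (α₁ + α₂) - α₂ * r := by
  rcases le_or_gt r R with h₁ | h₁
  · have h₂ : ¬ 2 * R < r := by linarith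
    have hφ : cutoffPhi α₁ α₂ R r = r * α₁ := by
      simp [cutoffPhi, hr, h₁, h₁.not_gt, h₂]
    nlinarith
  rcases le_or_gt r (2 * R) with h₂ | h₂
  · have hφ : cutoffPhi α₁ α₂ R r = r * (α₁ - (α₁ + α₂) * (r / R - 1)) := by
      simp [cutoffPhi, h₁, h₁.not_ge, h₂, h₂.not_gt]
    have hratio : 1 ≤ r / R := (one_le_div (by linarith)).2 h₁.le
    nlinarith [mul_nonneg hα (sub_nonneg.2 hratio)]
  · have hφ : cutoffPhi α₁ α₂ R r = r * -α₂ := by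
      simp [cutoffPhi, h₁.not_ge, h₂, h₂.not_ge]
    nlinarith

section InnerProductSpace

variable {F : Type*} [NormedAddCommGroup F] [InnerProductSpace ℝ F]

theorem hasFDerivAt_one_add_norm_sq_rpow (p : ℝ) (x : F) :
    HasFDerivAt (fun y : F => (1 + ‖y‖ ^ 2) ^ p)
      ((2 * p * (1 + ‖x‖ ^ 2) ^ (p - 1)) • innerSL ℝ x) x := by
  have hpos : 1 + ‖x‖ ^ 2 ≠ 0 := by positivity
  refine ((Real.hasDerivAt_rpow_const (Or.inl hpos)).comp_hasFDerivAt x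
    ((hasStrictFDerivAt_norm_sq x).hasFDerivAt.const_add 1)).congr_fderiv ?_
  ext y
  simp only [_root_.smul_apply, innerSL_apply_apply, smul_eq_mul, two_smul, _root_.add_apply]
  ring

theorem gradient_one_add_norm_sq_rpow [CompleteSpace F] (p : ℝ) (x : F) :
    gradient (fun y : F => (1 + ‖y‖ ^ 2) ^ p) x = (2 * p * (1 + ‖x‖ ^ 2) ^ (p - 1)) • x := by
  refine (hasGradientAt_iff_hasFDerivAt.2 ?_).gradient
  refine (hasFDerivAt_one_add_norm_sq_rpow p x).congr_fderiv ?_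
  ext y
  simp

theorem fderiv_fderiv_one_add_norm_sq_rpow_apply (p : ℝ) (x v w : F) :
    fderiv ℝ (fun y => fderiv ℝ (fun z : F => (1 + ‖z‖ ^ 2) ^ p) y v) x w =
      4 * p * (p - 1) * (1 + ‖x‖ ^ 2) ^ (p - 2) * (⟪x, v⟫ * ⟪x, w⟫)
        + 2 * p * (1 + ‖x‖ ^ 2) ^ (p - 1) * ⟪v, w⟫ := by
  have hfun : (fun y => fderiv ℝ (fun z : F => (1 + ‖z‖ ^ 2) ^ p) y v) =
      fun y => 2 * p * (1 + ‖y‖ ^ 2) ^ (p - 1) * ⟪v, y⟫ := by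
    funext y
    simp [(hasFDerivAt_one_add_norm_sq_rpow p y).fderiv, real_inner_comm, mul_assoc]
  have hderiv : HasFDerivAt (fun y => 2 * p * (1 + ‖y‖ ^ 2) ^ (p - 1) * ⟪v, y⟫) _ x :=
    ((hasFDerivAt_one_add_norm_sq_rpow (p - 1) x).const_mul (2 * p)).mul
      (innerSL ℝ v).hasFDerivAt
  rw [hfun, hderiv.fderiv]
  simp only [_root_.add_apply, _root_.smul_apply, coe_innerSL_apply, smul_eq_mul]
  rw [show p - 1 - 1 = p - 2 by ring, real_inner_comm x v]
  ring

end InnerProductSpace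

section Euclidean

variable {d : ℕ}

local notation "E" => EuclideanSpace ℝ (Fin d)

section HilbertSchmidt

attribute [local instance] Matrix.frobeniusSeminormedAddCommGroup

theorem hsNorm_eq_frobenius_norm (A : Matrix (Fin d) (Fin d) ℝ) : hsNorm A = ‖A‖ := by
  simp [hsNorm, frobenius_norm_def, Real.sqrt_eq_rpow]

theorem hsNorm_le_hsNorm_sub_add (A B : Matrix (Fin d) (Fin d) ℝ) :
    hsNorm A ≤ hsNorm (A - B) + hsNorm B := by
  simpa only [hsNorm_eq_frobenius_norm] using norm_le_norm_sub_add A B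

theorem trace_mul_transpose_self (M : Matrix (Fin d) (Fin d) ℝ) :
    trace (M * Mᵀ) = hsNorm M ^ 2 := by
  rw [hsNorm, Real.sq_sqrt (by positivity)]
  simp [trace, mul_apply, sq]

theorem norm_mulVec_le_hsNorm_mul_norm (M : Matrix (Fin d) (Fin d) ℝ) (x : E) :
    ‖WithLp.toLp 2 (M *ᵥ x.ofLp)‖ ≤ hsNorm M * ‖x‖ :=
  calc ‖WithLp.toLp 2 (M *ᵥ x.ofLp)‖ = ‖M * replicateCol (Fin 1) x.ofLp‖ := by
        rw [← replicateCol_mulVec]; exact (frobenius_norm_replicateCol _).symm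
    _ ≤ ‖M‖ * ‖replicateCol (Fin 1) x.ofLp‖ := frobenius_norm_mul _ _
    _ = hsNorm M * ‖x‖ := by
        rw [hsNorm_eq_frobenius_norm]; exact congrArg _ (frobenius_norm_replicateCol _)

theorem dotProduct_mul_transpose_mulVec_le (M : Matrix (Fin d) (Fin d) ℝ) (x : E) :
    x.ofLp ⬝ᵥ (M * Mᵀ) *ᵥ x.ofLp ≤ hsNorm M ^ 2 * ‖x‖ ^ 2 := by
  have h : x.ofLp ⬝ᵥ (M * Mᵀ) *ᵥ x.ofLp = ‖WithLp.toLp 2 (Mᵀ *ᵥ x.ofLp)‖ ^ 2 := by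
    rw [← mulVec_mulVec, dotProduct_mulVec, ← transpose_transpose M, vecMul_transpose,
      transpose_transpose, EuclideanSpace.real_norm_sq_eq]
    simp [dotProduct, sq]
  rw [h, ← mul_pow, hsNorm_eq_frobenius_norm, ← frobenius_norm_transpose,
    ← hsNorm_eq_frobenius_norm]
  exact pow_le_pow_left₀ (norm_nonneg _) (norm_mulVec_le_hsNorm_mul_norm _ x) 2

end HilbertSchmidt

theorem secondPartial_one_add_norm_sq_rpow (p : ℝ) (x : E) (i j : Fin d) :
    secondPartial d (fun y => (1 + ‖y‖ ^ 2) ^ p) x i j =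
      4 * p * (p - 1) * (1 + ‖x‖ ^ 2) ^ (p - 2) * (x i * x j)
        + 2 * p * (1 + ‖x‖ ^ 2) ^ (p - 1) * (1 : Matrix (Fin d) (Fin d) ℝ) i j := by
  rw [secondPartial, fderiv_fderiv_one_add_norm_sq_rpow_apply, EuclideanSpace.inner_single_right,
    EuclideanSpace.inner_single_right, EuclideanSpace.inner_single_left, PiLp.single_apply,
    Matrix.one_apply]
  simp [eq_comm, mul_comm]

theorem diffusionGen_one_add_norm_sq_rpow (b : E → E) (σ : E → Matrix (Fin d) (Fin d) ℝ)
    (p : ℝ) (x : E) :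
    diffusionGen d b σ (fun y => (1 + ‖y‖ ^ 2) ^ p) x =
      2 * p * (1 + ‖x‖ ^ 2) ^ (p - 1) * ⟪b x, x⟫
        + 2 * p * (p - 1) * (1 + ‖x‖ ^ 2) ^ (p - 2) * (x.ofLp ⬝ᵥ (σ x * (σ x)ᵀ) *ᵥ x.ofLp)
        + p * (1 + ‖x‖ ^ 2) ^ (p - 1) * trace (σ x * (σ x)ᵀ) := by
  simp only [diffusionGen, gradient_one_add_norm_sq_rpow, real_inner_smul_right,
    secondPartial_one_add_norm_sq_rpow, mul_add, Finset.sum_add_distrib, dotProduct, mulVec,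
    trace, diag, Matrix.one_apply, mul_ite, mul_zero, Finset.sum_ite_eq', Finset.mem_univ,
    if_true, Finset.mul_sum]
  rw [← add_assoc]
  congr 1
  congr 1
  all_goals refine Finset.sum_congr rfl fun i _ => ?_
  · exact Finset.sum_congr rfl fun j _ => by ring
  · ring

theorem diffusionGen_one_add_norm_sq_rpow_le {θ q : ℝ} (hθ : 0 ≤ θ) (hq : 2 ≤ q) (b : E → E)
    (σ σhat : E → Matrix (Fin d) (Fin d) ℝ) (x : E)
    (hdecomp : σ x * (σ x)ᵀ = θ • (1 : Matrix (Fin d) (Fin d) ℝ) + σhat x * (σhat x)ᵀ) :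
    diffusionGen d b σ (fun y => (1 + ‖y‖ ^ 2) ^ (q / 2)) x ≤
      q / 2 * (1 + ‖x‖ ^ 2) ^ (q / 2 - 1) *
        (2 * ⟪b x, x⟫ + (q - 1) * hsNorm (σhat x) ^ 2 + θ * (q - 2 + d)) := by
  rw [diffusionGen_one_add_norm_sq_rpow]
  set u := 1 + ‖x‖ ^ 2
  have hu : 0 < u := by positivity
  have hquad : x.ofLp ⬝ᵥ (σ x * (σ x)ᵀ) *ᵥ x.ofLp ≤ (θ + hsNorm (σhat x) ^ 2) * u := by
    have hxx : x.ofLp ⬝ᵥ x.ofLp = ‖x‖ ^ 2 := by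
      rw [EuclideanSpace.real_norm_sq_eq]
      simp [dotProduct, sq]
    rw [hdecomp, add_mulVec, smul_mulVec, one_mulVec, dotProduct_add, dotProduct_smul, hxx,
      smul_eq_mul]
    nlinarith [dotProduct_mul_transpose_mulVec_le (σhat x) x, sq_nonneg (hsNorm (σhat x))]
  have htrace : trace (σ x * (σ x)ᵀ) = θ * d + hsNorm (σhat x) ^ 2 := by
    rw [hdecomp, trace_add, trace_smul, trace_one, Fintype.card_fin, trace_mul_transpose_self,
      smul_eq_mul]
  have hpow : u ^ (q / 2 - 1) = u ^ (q / 2 - 2) * u := by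
    rw [← Real.rpow_add_one hu.ne']; ring_nf
  have hquad' := mul_le_mul_of_nonneg_left hquad
    (mul_nonneg (by nlinarith) (Real.rpow_nonneg hu.le _) :
      0 ≤ 2 * (q / 2) * (q / 2 - 1) * u ^ (q / 2 - 2))
  rw [htrace]
  linear_combination hquad' - (2 * (q / 2) * (q / 2 - 1) * (θ + hsNorm (σhat x) ^ 2)) * hpow

theorem two_inner_add_hsNorm_sq_le {L α₁ α₂ R q : ℝ} (hα : 0 ≤ α₁ + α₂) (hR : 0 ≤ R)
    (hq : 2 ≤ q) (b : E → E) (σhat : E → Matrix (Fin d) (Fin d) ℝ)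
    (hI : ∀ x y : E, hsNorm (σhat x - σhat y) ≤ L * ‖x - y‖)
    (hII : ∀ x y : E, 2 * ⟪b x - b y, x - y⟫ + hsNorm (σhat x - σhat y) ^ 2 ≤
      cutoffPhi α₁ α₂ R ‖x - y‖ * ‖x - y‖)
    (x : E) :
    2 * ⟪b x, x⟫ + (q - 1) * hsNorm (σhat x) ^ 2 ≤
      -(α₂ - (q - 2) * L ^ 2) * ‖x‖ ^ 2
        + (2 * R * (α₁ + α₂) + 2 * ‖b 0‖ + 2 * (q - 1) * hsNorm (σhat 0) * L) * ‖x‖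
        + (q - 1) * hsNorm (σhat 0) ^ 2 := by
  set S := hsNorm (σhat x - σhat 0)
  set β := hsNorm (σhat 0)
  have hS0 : 0 ≤ S := Real.sqrt_nonneg _
  have hS : S ≤ L * ‖x‖ := by simpa using hI x 0
  have hdrift : 2 * ⟪b x - b 0, x⟫ + S ^ 2 ≤ (2 * R * (α₁ + α₂) - α₂ * ‖x‖) * ‖x‖ := by
    simpa using (sub_zero x ▸ hII x 0).trans
      (mul_le_mul_of_nonneg_right (cutoffPhi_le hα hR (norm_nonneg x)) (norm_nonneg x))
  have hb0 : ⟪b 0, x⟫ ≤ ‖b 0‖ * ‖x‖ := real_inner_le_norm _ _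
  have hT : hsNorm (σhat x) ^ 2 ≤ (S + β) ^ 2 :=
    pow_le_pow_left₀ (Real.sqrt_nonneg _) (hsNorm_le_hsNorm_sub_add _ _) 2
  rw [inner_sub_left] at hdrift
  nlinarith [mul_le_mul_of_nonneg_left hT (by linarith : 0 ≤ q - 1),
    mul_le_mul_of_nonneg_left (pow_le_pow_left₀ hS0 hS 2) (by linarith : 0 ≤ q - 2),
    mul_le_mul_of_nonneg_left hS
      (mul_nonneg (by linarith : 0 ≤ 2 * (q - 1)) (Real.sqrt_nonneg _) : 0 ≤ 2 * (q - 1) * β)]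

theorem exists_two_inner_add_hsNorm_sq_le {L α₁ α₂ R q : ℝ} (hα : 0 ≤ α₁ + α₂) (hR : 0 ≤ R)
    (hq : 2 ≤ q) (hε : 0 < α₂ - (q - 2) * L ^ 2) (b : E → E)
    (σhat : E → Matrix (Fin d) (Fin d) ℝ)
    (hI : ∀ x y : E, hsNorm (σhat x - σhat y) ≤ L * ‖x - y‖)
    (hII : ∀ x y : E, 2 * ⟪b x - b y, x - y⟫ + hsNorm (σhat x - σhat y) ^ 2 ≤
      cutoffPhi α₁ α₂ R ‖x - y‖ * ‖x - y‖) :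
    ∃ C ≥ 0, ∀ x : E, 2 * ⟪b x, x⟫ + (q - 1) * hsNorm (σhat x) ^ 2 ≤
      C - (α₂ - (q - 2) * L ^ 2) / 2 * (1 + ‖x‖ ^ 2) := by
  set ε := α₂ - (q - 2) * L ^ 2
  set a := 2 * R * (α₁ + α₂) + 2 * ‖b 0‖ + 2 * (q - 1) * hsNorm (σhat 0) * L
  have hq1 : 0 ≤ q - 1 := by linarith
  refine ⟨(q - 1) * hsNorm (σhat 0) ^ 2 + a ^ 2 / (2 * ε) + ε / 2, by positivity, fun x => ?_⟩
  have hamgm : a * ‖x‖ ≤ a ^ 2 / (2 * ε) + ε / 2 * ‖x‖ ^ 2 := by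
    rw [div_add' _ _ _ (by positivity), le_div_iff₀ (by positivity)]
    nlinarith [sq_nonneg (a - ε * ‖x‖)]
  linarith [two_inner_add_hsNorm_sq_le hα hR hq b σhat hI hII x]

end Euclidean

theorem lyapunov_bound_diffusion_general {d : ℕ}
    (θ : ℝ) (hθ : 0 < θ)
    (b : EuclideanSpace ℝ (Fin d) → EuclideanSpace ℝ (Fin d))
    (σ σhat : EuclideanSpace ℝ (Fin d) → Matrix (Fin d) (Fin d) ℝ)
    (hdecomp : ∀ x, σ x * (σ x)ᵀ = θ • (1 : Matrix (Fin d) (Fin d) ℝ) + σhat x * (σhat x)ᵀ)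
    (L α₁ α₂ R : ℝ) (hL : 0 < L) (hα₁ : 0 < α₁) (hα₂ : 0 < α₂) (hR : 0 < R)
    (hI : ∀ x y : EuclideanSpace ℝ (Fin d), hsNorm (σhat x - σhat y) ≤ L * ‖x - y‖)
    (hII : ∀ x y : EuclideanSpace ℝ (Fin d),
      2 * ⟪b x - b y, x - y⟫ + hsNorm (σhat x - σhat y) ^ 2 ≤
        cutoffPhi α₁ α₂ R ‖x - y‖ * ‖x - y‖)
    (q : ℝ) (hq2 : 2 < q) (hq : q < 2 + α₂ / L ^ 2) :
    ∃ K₁ > (0:ℝ), ∃ K₂ > (0:ℝ), ∀ x : EuclideanSpace ℝ (Fin d),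
      diffusionGen d b σ (fun x' => (1 + ‖x'‖ ^ 2) ^ (q / 2)) x ≤
        K₁ - K₂ * (1 + ‖x‖ ^ 2) ^ (q / 2) := by
  set ε := α₂ - (q - 2) * L ^ 2
  have hε : 0 < ε := by
    have := (lt_div_iff₀ (by positivity)).1 (sub_lt_iff_lt_add'.2 hq)
    linarith
  obtain ⟨C, hC0, hC⟩ :=
    exists_two_inner_add_hsNorm_sq_le (by linarith) hR.le hq2.le hε b σhat hI hII
  have hθd : 0 ≤ θ * (q - 2 + d) := mul_nonneg hθ.le (by linarith [d.cast_nonneg (α := ℝ)])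
  obtain ⟨K, hK, hKu⟩ := exists_rpow_mul_sub_le (s := q / 2 - 1) (c := q / 2 * (ε / 2))
    (C := q / 2 * (C + θ * (q - 2 + d))) (by linarith) (by positivity) (by positivity)
  refine ⟨K, hK, q / 2 * (ε / 2) / 2, by positivity, fun x => ?_⟩
  have hu : 0 < 1 + ‖x‖ ^ 2 := by positivity
  calc diffusionGen d b σ (fun x' => (1 + ‖x'‖ ^ 2) ^ (q / 2)) x
      ≤ q / 2 * (1 + ‖x‖ ^ 2) ^ (q / 2 - 1) *
          (2 * ⟪b x, x⟫ + (q - 1) * hsNorm (σhat x) ^ 2 + θ * (q - 2 + d)) :=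
        diffusionGen_one_add_norm_sq_rpow_le hθ.le hq2.le b σ σhat x (hdecomp x)
    _ ≤ q / 2 * (1 + ‖x‖ ^ 2) ^ (q / 2 - 1) *
          (C + θ * (q - 2 + d) - ε / 2 * (1 + ‖x‖ ^ 2)) := by
        gcongr
        linarith [hC x]
    _ = (1 + ‖x‖ ^ 2) ^ (q / 2 - 1) *
          (q / 2 * (C + θ * (q - 2 + d)) - q / 2 * (ε / 2) * (1 + ‖x‖ ^ 2)) := by ring
    _ ≤ K - q / 2 * (ε / 2) / 2 * (1 + ‖x‖ ^ 2) ^ (q / 2 - 1 + 1) := hKu _ hu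
    _ = K - q / 2 * (ε / 2) / 2 * (1 + ‖x‖ ^ 2) ^ (q / 2) := by rw [sub_add_cancel]

/-- **Example 5.1 (Lyapunov inequality).**  Under uniform ellipticity
`σσᵀ = θ I + σ̂σ̂ᵀ`, the Lipschitz condition (I) on `σ̂` and the long-distance
dissipativity condition (II), for every `2 < q < 2 + α₂ L⁻²` the function
`g(x) = (1 + |x|²)^{q/2}` satisfies `ℒ g ≤ K₁ - K₂ g` for some constants `K₁, K₂ > 0`. -/
theorem lyapunov_bound_diffusion {d : ℕ} (hd : 0 < d)
    (θ : ℝ) (hθ : 0 < θ)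
    (b : EuclideanSpace ℝ (Fin d) → EuclideanSpace ℝ (Fin d)) (hb : Measurable b)
    (σ σhat : EuclideanSpace ℝ (Fin d) → Matrix (Fin d) (Fin d) ℝ)
    (hσ : ∀ i j : Fin d, Measurable fun x => σ x i j)
    (hσhat : ∀ i j : Fin d, Measurable fun x => σhat x i j)
    (hdecomp : ∀ x, σ x * (σ x)ᵀ = θ • (1 : Matrix (Fin d) (Fin d) ℝ) + σhat x * (σhat x)ᵀ)
    (L α₁ α₂ R : ℝ) (hL : 0 < L) (hα₁ : 0 < α₁) (hα₂ : 0 < α₂) (hR : 0 < R)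
    (hI : ∀ x y : EuclideanSpace ℝ (Fin d), hsNorm (σhat x - σhat y) ≤ L * ‖x - y‖)
    (hII : ∀ x y : EuclideanSpace ℝ (Fin d),
      2 * ⟪b x - b y, x - y⟫ + hsNorm (σhat x - σhat y) ^ 2 ≤
        cutoffPhi α₁ α₂ R ‖x - y‖ * ‖x - y‖)
    (q : ℝ) (hq2 : 2 < q) (hq : q < 2 + α₂ / L ^ 2) :
    ∃ K₁ > (0:ℝ), ∃ K₂ > (0:ℝ), ∀ x : EuclideanSpace ℝ (Fin d),
      diffusionGen d b σ (fun x' => (1 + ‖x'‖ ^ 2) ^ (q / 2)) x ≤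
        K₁ - K₂ * (1 + ‖x‖ ^ 2) ^ (q / 2) :=
  lyapunov_bound_diffusion_general θ hθ b σ σhat hdecomp L α₁ α₂ R hL hα₁ hα₂ hR hI hII q hq2 hq
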